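/- arXiv:0706.2852 — 2 statements merged into one kernel-verified Lean document; each statement's English description precedes it below -/
import Mathlib

section
/- Let $T = (T_{\overline{j}i\overline{l}k})$ be a tensor on $\mathbb{C}^n$ (i.e., a complex-valued function of four indices in $\{1,\dots,n\}$) satisfying the symmetry $T_{\overline{j}i\overline{l}k} = T_{\overline{l}i\overline{j}k} = T_{\overline{j}k\overline{l}i}$. Suppose $T$ is Griffiths nonnegative and satisfies the strengthened condition $\sum_{i,j,k,l} (T_{\overline{j}i\overline{l}k} - c\,\delta_{ji}\delta_{lk}) \overline{V^j} V^i \overline{W^l} W^k \geq 0$ for all vectors $V, W \in \mathbb{C}^n$ and some constant $c > 0$. Let $S_{\overline{j}i} = \sum_k T_{\overline{j}i\overline{k}k}$. Then the tensor $T_{\overline{j}i\overline{l}k} + S_{\overline{j}i}\delta_{lk} - nc\,\delta_{ji}\delta_{lk}$ is Nakano nonnegative, i.e., $\sum_{i,j,k,l} (T_{\overline{j}i\overline{l}k} + S_{\overline{j}i}\delta_{lk} - nc\,\delta_{ji}\delta_{lk}) \overline{\zeta^{jl}} \zeta^{ik} \geq 0$ for every matrix $\zeta \in \mathbb{C}^{n\times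 n}$. -/
/-! The heart of the matter is the Demailly–Skoda lemma: if `T` is Griffiths nonnegative, then
`T + S ⊗ δ` is Nakano nonnegative. To see it, average the Griffiths form of `T` over the test
vectors `W_a = (ψ a_k)_k` and `V_a = (∑_m conj (ψ a_m) ζ_{jm})_j`, where `a` runs over `(ℤ/3)^n`
and `ψ` is a primitive character of `ℤ/3`. By character orthogonality only the index pairings
`{m, k} = {p, l}` survive, and the average is the Nakano form of `T + S ⊗ δ` minus its diagonal
part `∑_q Griffiths(ζ_{·q}, e_q)`, which is itself nonnegative.

Applied to the Griffiths-nonnegative tensor `T - c δ ⊗ δ`, whose trace twist is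
`T + S ⊗ δ - (n + 1) c δ ⊗ δ`, this leaves the surplus `c ∑ |ζ_{ik}|² ≥ 0`. -/

open Complex Finset ComplexOrder ComplexConjugate

namespace AddChar

theorem map_sum_eq_prod {ι A M : Type*} [AddCommMonoid A] [CommMonoid M] (ψ : AddChar A M)
    (s : Finset ι) (f : ι → A) : ψ (∑ i ∈ s, f i) = ∏ i ∈ s, ψ (f i) := by
  induction s using Finset.cons_induction with
  | empty => simp
  | cons i s hi ih => rw [sum_cons, prod_cons, map_add_eq_mul, ih]

theorem apply_add_sub_sub {G : Type*} [AddCommGroup G] [Finite G] (ψ : AddChar G ℂ)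
    (x y z w : G) : ψ (x + y - z - w) = ψ x * ψ y * conj (ψ z) * conj (ψ w) := by
  simp only [sub_eq_add_neg, map_add_eq_mul, map_neg_eq_conj]

variable {ι R R' : Type*} [Fintype ι] [DecidableEq ι] [CommRing R] [Fintype R] [DecidableEq R]
  [CommRing R'] [IsDomain R'] {ψ : AddChar R R'}

theorem sum_apply_dotProduct (hψ : ψ.IsPrimitive) (t : ι → R) :
    ∑ a : ι → R, ψ (t ⬝ᵥ a) = if t = 0 then (Fintype.card R : R') ^ Fintype.card ι else 0 := by
  simp_rw [dotProduct, map_sum_eq_prod]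
  rw [← Fintype.prod_sum (fun i x => ψ (t i * x))]
  simp_rw [mul_comm (t _), sum_mulShift _ hψ, Nat.cast_ite, Nat.cast_zero, prod_ite_zero]
  simp [funext_iff]

theorem sum_apply_add_sub_sub (hψ : ψ.IsPrimitive) (h2 : (2 : R) ≠ 0) (m k p l : ι) :
    ∑ a : ι → R, ψ (a m + a k - a p - a l) =
      if m = p ∧ k = l ∨ m = l ∧ k = p then (Fintype.card R : R') ^ Fintype.card ι else 0 := by
  have h1 : (1 : R) ≠ 0 := fun h => h2 (by rw [← one_add_one_eq_two, h, add_zero])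
  have hdot (a : ι → R) : a m + a k - a p - a l =
      (Pi.single m 1 + Pi.single k 1 - Pi.single p 1 - Pi.single l 1) ⬝ᵥ a := by
    simp only [sub_dotProduct, add_dotProduct, single_dotProduct, one_mul]
  simp_rw [hdot, sum_apply_dotProduct hψ, sub_sub, sub_eq_zero]
  refine if_congr ?_ rfl rfl
  rw [Pi.single_add_single_eq_single_add_single h1 h1, one_add_one_eq_two]
  simp [h2]

end AddChar

theorem sum_sum_ite_pair_eq {ι M : Type*} [Fintype ι] [DecidableEq ι] [AddCommGroup M]
    (f : ι → ι → M) (k l : ι) :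
    ∑ m, ∑ p, (if m = p ∧ k = l ∨ m = l ∧ k = p then f m p else 0) =
      (if l = k then ∑ m, f m m else 0) + f l k - if l = k then f k k else 0 := by
  by_cases h : l = k
  · subst h
    have hdiag (m p : ι) : (m = p ∨ m = l ∧ l = p) ↔ m = p :=
      or_iff_left_of_imp fun h => h.1.trans h.2
    simp [hdiag]
  · simp [h, Ne.symm h, ite_and]

section Forms

variable {ι : Type*} [Fintype ι]

def griffithsForm (T : ι → ι → ι → ι → ℂ) (V W : ι → ℂ) : ℂ :=
  ∑ i, ∑ j, ∑ k, ∑ l, T j i l k * conj (V j) * V i * conj (W l) * W k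

def nakanoForm (T : ι → ι → ι → ι → ℂ) (ζ : ι → ι → ℂ) : ℂ :=
  ∑ i, ∑ j, ∑ k, ∑ l, T j i l k * conj (ζ j l) * ζ i k

def testVector {R : Type*} [AddMonoid R] (ψ : AddChar R ℂ) (ζ : ι → ι → ℂ) (a : ι → R) :
    ι → ℂ :=
  fun j => ∑ m, conj (ψ (a m)) * ζ j m

theorem sum_griffithsForm {α : Type*} (s : Finset α) (T : ι → ι → ι → ι → ℂ)
    (V W : α → ι → ℂ) :
    ∑ a ∈ s, griffithsForm T (V a) (W a) =
      ∑ i, ∑ j, ∑ k, ∑ l, T j i l k * ∑ a ∈ s, conj (V a j) * V a i * conj (W a l) * W a k := by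
  simp only [griffithsForm, mul_sum, mul_assoc]
  rw [sum_comm]; refine sum_congr rfl fun i _ => ?_
  rw [sum_comm]; refine sum_congr rfl fun j _ => ?_
  rw [sum_comm]; refine sum_congr rfl fun k _ => ?_
  exact sum_comm

variable [DecidableEq ι]

def addTrace (T : ι → ι → ι → ι → ℂ) : ι → ι → ι → ι → ℂ :=
  fun j i l k => T j i l k + (∑ m, T j i m m) * if l = k then 1 else 0

theorem nakanoForm_add_delta (T : ι → ι → ι → ι → ℂ) (c : ℂ) (ζ : ι → ι → ℂ) :
    nakanoForm (fun j i l k => T j i l k + c * (if j = i then 1 else 0) * (if l = k then 1 else 0))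
        ζ = nakanoForm T ζ + c * ∑ i, ∑ k, conj (ζ i k) * ζ i k := by
  simp [nakanoForm, add_mul, sum_add_distrib, mul_sum, mul_assoc]

theorem sum_griffithsForm_single (T : ι → ι → ι → ι → ℂ) (ζ : ι → ι → ℂ) :
    ∑ q, griffithsForm T (fun j => ζ j q) (Pi.single q 1) =
      ∑ i, ∑ j, ∑ k, T j i k k * conj (ζ j k) * ζ i k := by
  simp only [griffithsForm, Pi.single_apply, MonoidWithZeroHom.map_ite_one_zero, mul_ite, mul_one,
    mul_zero, sum_ite_irrel, sum_ite_eq', mem_univ, if_true, sum_const_zero]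
  rw [sum_comm]
  exact sum_congr rfl fun i _ => sum_comm

variable {R : Type*} [CommRing R] [Fintype R] [DecidableEq R] {ψ : AddChar R ℂ}

theorem sum_conj_testVector_mul (hψ : ψ.IsPrimitive) (h2 : (2 : R) ≠ 0) (ζ : ι → ι → ℂ)
    (i j k l : ι) :
    ∑ a : ι → R, conj (testVector ψ ζ a j) * testVector ψ ζ a i * conj (ψ (a l)) * ψ (a k) =
      (Fintype.card R : ℂ) ^ Fintype.card ι *
        ((if l = k then ∑ m, conj (ζ j m) * ζ i m else 0) + conj (ζ j l) * ζ i k -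
          if l = k then conj (ζ j k) * ζ i k else 0) := by
  have hterm (a : ι → R) :
      conj (testVector ψ ζ a j) * testVector ψ ζ a i * conj (ψ (a l)) * ψ (a k) =
        ∑ m, ∑ p, conj (ζ j m) * ζ i p * ψ (a m + a k - a p - a l) := by
    rw [testVector, testVector, map_sum, sum_mul_sum]
    simp only [sum_mul, map_mul, conj_conj, ψ.apply_add_sub_sub]
    exact sum_congr rfl fun m _ => sum_congr rfl fun p _ => by ring
  calc _ = ∑ m, ∑ p, ∑ a : ι → R, conj (ζ j m) * ζ i p * ψ (a m + a k - a p - a l) := by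
        simp_rw [hterm]
        rw [sum_comm]
        exact sum_congr rfl fun m _ => sum_comm
    _ = ∑ m, ∑ p, if m = p ∧ k = l ∨ m = l ∧ k = p then
          conj (ζ j m) * ζ i p * (Fintype.card R : ℂ) ^ Fintype.card ι else 0 := by
        simp_rw [← mul_sum, AddChar.sum_apply_add_sub_sub hψ h2, mul_ite, mul_zero]
    _ = _ := by
        rw [sum_sum_ite_pair_eq, ← sum_mul]
        split_ifs <;> ring

theorem sum_griffithsForm_testVector_add (hψ : ψ.IsPrimitive) (h2 : (2 : R) ≠ 0)
    (T : ι → ι → ι → ι → ℂ) (ζ : ι → ι → ℂ) :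
    ∑ a : ι → R, griffithsForm T (testVector ψ ζ a) (fun k => ψ (a k)) +
        (Fintype.card R : ℂ) ^ Fintype.card ι *
          ∑ q, griffithsForm T (fun j => ζ j q) (Pi.single q 1) =
      (Fintype.card R : ℂ) ^ Fintype.card ι * nakanoForm (addTrace T) ζ := by
  have havg : ∑ a : ι → R, griffithsForm T (testVector ψ ζ a) (fun k => ψ (a k)) =
      (Fintype.card R : ℂ) ^ Fintype.card ι * ∑ i, ∑ j, ∑ k, ∑ l, T j i l k *
        ((if l = k then ∑ m, conj (ζ j m) * ζ i m else 0) + conj (ζ j l) * ζ i k -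
          if l = k then conj (ζ j k) * ζ i k else 0) := by
    rw [sum_griffithsForm]
    simp only [sum_conj_testVector_mul hψ h2 ζ]
    simp only [mul_sum, mul_left_comm (T _ _ _ _)]
  rw [havg, sum_griffithsForm_single, ← mul_add]
  congr 1
  simp only [nakanoForm, addTrace, ← sum_add_distrib]
  refine sum_congr rfl fun i _ => sum_congr rfl fun j _ => ?_
  simp only [mul_sub, mul_add, mul_ite, mul_zero, add_mul, ite_mul, zero_mul, sum_sub_distrib,
    sum_add_distrib, sum_ite_eq', mem_univ, if_true]
  simp only [mul_one, mul_assoc, ← sum_mul, ← mul_sum]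
  ring

theorem nakanoForm_addTrace_nonneg (T : ι → ι → ι → ι → ℂ)
    (hT : ∀ V W, 0 ≤ griffithsForm T V W) (ζ : ι → ι → ℂ) :
    0 ≤ nakanoForm (addTrace T) ζ := by
  have hC : 0 < (Fintype.card (ZMod 3) : ℂ) ^ Fintype.card ι := by positivity
  refine le_of_mul_le_mul_left ?_ hC
  rw [mul_zero, ← sum_griffithsForm_testVector_add (ZMod.isPrimitive_stdAddChar 3) (by decide)]
  exact add_nonneg (sum_nonneg fun a _ => hT _ _) (mul_nonneg hC.le (sum_nonneg fun q _ => hT _ _))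

end Forms

theorem stmt3_general (n : ℕ) (T : Fin n → Fin n → Fin n → Fin n → ℂ) (c : ℝ) (hc : 0 < c)
    (hGr' : ∀ V W : Fin n → ℂ, 0 ≤ ∑ i, ∑ j, ∑ k, ∑ l,
      (T j i l k - (c : ℂ) * (if j = i then 1 else 0) * (if l = k then 1 else 0)) *
        (starRingEnd ℂ) (V j) * V i * (starRingEnd ℂ) (W l) * W k) :
    ∀ ζ : Fin n → Fin n → ℂ, 0 ≤ ∑ i, ∑ j, ∑ k, ∑ l,
      (T j i l k + (∑ m, T j i m m) * (if l = k then 1 else 0)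
          - (n : ℂ) * (c : ℂ) * (if j = i then 1 else 0) * (if l = k then 1 else 0)) *
        (starRingEnd ℂ) (ζ j l) * ζ i k := by
  intro ζ
  have hζ : 0 ≤ ∑ i, ∑ k, conj (ζ i k) * ζ i k :=
    sum_nonneg fun i _ => sum_nonneg fun k _ => star_mul_self_nonneg _
  convert add_nonneg (nakanoForm_addTrace_nonneg _ hGr' ζ)
    (mul_nonneg (Complex.zero_le_real.mpr hc.le) hζ) using 1
  rw [← nakanoForm_add_delta]
  show nakanoForm _ ζ = _
  congr 1
  funext j i l k
  simp only [addTrace, mul_ite, mul_one, mul_zero, if_true, sum_sub_distrib, sum_ite_irrel, sum_const,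
    card_univ, Fintype.card_fin, nsmul_eq_mul]
  split_ifs <;> ring

/-- Lemma 5 of the paper (Demailly's argument), pointwise linear-algebra form:
if `T` has the Kähler curvature symmetries, is Griffiths nonnegative, and
satisfies the strengthened Griffiths bound with constant `c > 0`, then
`T_{j̄il̄k} + S_{j̄i} δ_{lk} - nc δ_{ji} δ_{lk}` is Nakano nonnegative, where
`S_{j̄i} = ∑_k T_{j̄ik̄k}`.  Indices of `T j i l k` are in the order `j̄ i l̄ k`. -/
theorem stmt3 (n : ℕ) (T : Fin n → Fin n → Fin n → Fin n → ℂ) (c : ℝ) (hc : 0 < c)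
    (hsym1 : ∀ i j k l, T j i l k = T l i j k)
    (hsym2 : ∀ i j k l, T j i l k = T j k l i)
    (hGr : ∀ V W : Fin n → ℂ, 0 ≤ ∑ i, ∑ j, ∑ k, ∑ l,
      T j i l k * (starRingEnd ℂ) (V j) * V i * (starRingEnd ℂ) (W l) * W k)
    (hGr' : ∀ V W : Fin n → ℂ, 0 ≤ ∑ i, ∑ j, ∑ k, ∑ l,
      (T j i l k - (c : ℂ) * (if j = i then 1 else 0) * (if l = k then 1 else 0)) *
        (starRingEnd ℂ) (V j) * V i * (starRingEnd ℂ) (W l) * W k) :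
    ∀ ζ : Fin n → Fin n → ℂ, 0 ≤ ∑ i, ∑ j, ∑ k, ∑ l,
      (T j i l k + (∑ m, T j i m m) * (if l = k then 1 else 0)
          - (n : ℂ) * (c : ℂ) * (if j = i then 1 else 0) * (if l = k then 1 else 0)) *
        (starRingEnd ℂ) (ζ j l) * ζ i k :=
  stmt3_general n T c hc hGr'
end

section
/- Let $n = 2$ and let $T = (T_{\overline{j}i\overline{l}k})$ be a tensor on $\mathbb{C}^2$ with the Kähler curvature symmetries $T_{\overline{j}i\overline{l}k} = T_{\overline{l}i\overline{j}k} = T_{\overline{j}k\overline{l}i}$ and the Hermitian symmetry $\overline{T_{\overline{j}i\overline{l}k}} = T_{\overline{i}j\overline{k}l}$. Then $T$ is Griffiths nonnegative if and only if $T$ is Nakano nonnegative. -/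
open Complex Finset ComplexOrder Matrix

/-!
The Kähler symmetries make the Nakano form `Q(ζ) = ∑ T_{j̄il̄k} ζ̄^{jl} ζ^{ik}` invariant under
transposing either copy of `ζ`, so `Q(ζ)` only depends on `ζ + ζᵀ`. In dimension two every
symmetric matrix is of the form `V ⊗ W + (V ⊗ W)ᵀ`, because every binary quadratic form over `ℂ`
is a product of two linear forms; and `Q(V ⊗ W)` is exactly the Griffiths form at `(V, W)`.
-/

section NakanoPairing

variable {ι : Type*} [Fintype ι] (T : ι → ι → ι → ι → ℂ)

noncomputable def nakanoPairing (η ζ : Matrix ι ι ℂ) : ℂ :=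
  ∑ i, ∑ j, ∑ k, ∑ l, T j i l k * starRingEnd ℂ (η j l) * ζ i k

lemma nakanoPairing_add_left (η η' ζ : Matrix ι ι ℂ) :
    nakanoPairing T (η + η') ζ = nakanoPairing T η ζ + nakanoPairing T η' ζ := by
  simp only [nakanoPairing, Matrix.add_apply, map_add, mul_add, add_mul, sum_add_distrib]

lemma nakanoPairing_add_right (η ζ ζ' : Matrix ι ι ℂ) :
    nakanoPairing T η (ζ + ζ') = nakanoPairing T η ζ + nakanoPairing T η ζ' := by
  simp only [nakanoPairing, Matrix.add_apply, mul_add, sum_add_distrib]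

variable {T}

lemma nakanoPairing_transpose_left (hsym : ∀ i j k l, T j i l k = T l i j k)
    (η ζ : Matrix ι ι ℂ) : nakanoPairing T ηᵀ ζ = nakanoPairing T η ζ := by
  refine sum_congr rfl fun i _ => ?_
  rw [sum_comm, eq_comm, sum_comm]
  refine sum_congr rfl fun k _ => ?_
  rw [sum_comm]
  simp only [transpose_apply, hsym i _ k]

lemma nakanoPairing_transpose_right (hsym : ∀ i j k l, T j i l k = T j k l i)
    (η ζ : Matrix ι ι ℂ) : nakanoPairing T η ζᵀ = nakanoPairing T η ζ := by
  unfold nakanoPairing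
  rw [sum_comm, eq_comm, sum_comm]
  refine sum_congr rfl fun j _ => ?_
  rw [sum_comm]
  simp only [transpose_apply, hsym _ j]

lemma nakanoPairing_self_eq_of_add_transpose_eq (hsym1 : ∀ i j k l, T j i l k = T l i j k)
    (hsym2 : ∀ i j k l, T j i l k = T j k l i) {ζ ζ' : Matrix ι ι ℂ}
    (h : ζ + ζᵀ = ζ' + ζ'ᵀ) : nakanoPairing T ζ ζ = nakanoPairing T ζ' ζ' := by
  have add_transpose_self (ξ : Matrix ι ι ℂ) :
      nakanoPairing T (ξ + ξᵀ) (ξ + ξᵀ) = 4 * nakanoPairing T ξ ξ := by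
    simp only [nakanoPairing_add_left, nakanoPairing_add_right,
      nakanoPairing_transpose_left hsym1, nakanoPairing_transpose_right hsym2]
    ring
  have := add_transpose_self ζ
  rw [h, add_transpose_self] at this
  exact (mul_left_cancel₀ four_ne_zero this).symm

lemma nakanoPairing_vecMulVec (V W : ι → ℂ) :
    nakanoPairing T (vecMulVec V W) (vecMulVec V W) =
      ∑ i, ∑ j, ∑ k, ∑ l,
        T j i l k * starRingEnd ℂ (V j) * V i * starRingEnd ℂ (W l) * W k := by
  simp only [nakanoPairing, vecMulVec_apply, map_mul]
  ac_rfl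

end NakanoPairing

-- `a x² + b x y + c y² = (p x + q y) (r x + s y)`
open Polynomial in
lemma IsAlgClosed.exists_binaryQuadratic_eq_mul {K : Type*} [Field K] [IsAlgClosed K]
    (a b c : K) : ∃ p q r s : K, a = p * r ∧ b = p * s + q * r ∧ c = q * s := by
  by_cases ha : a = 0
  · exact ⟨0, 1, b, c, by simp [ha], by ring, by ring⟩
  obtain ⟨t, ht⟩ := IsAlgClosed.exists_root (C a * X ^ 2 + C b * X + C c)
    (by rw [degree_quadratic ha]; decide)
  have ht : a * t ^ 2 + b * t + c = 0 := by simpa using ht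
  have hb : a * (b / a) = b := mul_div_cancel₀ b ha
  exact ⟨a, -(a * t), 1, b / a + t, by ring, by linear_combination -hb,
    by linear_combination ht + t * hb⟩

lemma exists_vecMulVec_add_transpose_eq {K : Type*} [Field K] [IsAlgClosed K]
    (ζ : Matrix (Fin 2) (Fin 2) K) :
    ∃ V W : Fin 2 → K, ζ + ζᵀ = vecMulVec V W + (vecMulVec V W)ᵀ := by
  obtain ⟨p, q, r, s, h00, h01, h11⟩ :=
    IsAlgClosed.exists_binaryQuadratic_eq_mul (ζ 0 0) (ζ 0 1 + ζ 1 0) (ζ 1 1)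
  refine ⟨![p, q], ![r, s], ?_⟩
  ext i k
  fin_cases i <;> fin_cases k <;> simp [h00, h11] <;> linear_combination h01

theorem stmt4_general (T : Fin 2 → Fin 2 → Fin 2 → Fin 2 → ℂ)
    (hsym1 : ∀ i j k l, T j i l k = T l i j k)
    (hsym2 : ∀ i j k l, T j i l k = T j k l i) :
    (∀ V W : Fin 2 → ℂ, 0 ≤ ∑ i, ∑ j, ∑ k, ∑ l,
        T j i l k * (starRingEnd ℂ) (V j) * V i * (starRingEnd ℂ) (W l) * W k) ↔
    (∀ ζ : Fin 2 → Fin 2 → ℂ, 0 ≤ ∑ i, ∑ j, ∑ k, ∑ l,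
        T j i l k * (starRingEnd ℂ) (ζ j l) * ζ i k) := by
  refine ⟨fun hG ζ => ?_, fun hN V W => ?_⟩
  · obtain ⟨V, W, hVW⟩ := exists_vecMulVec_add_transpose_eq ζ
    change 0 ≤ nakanoPairing T ζ ζ
    rw [nakanoPairing_self_eq_of_add_transpose_eq hsym1 hsym2 hVW, nakanoPairing_vecMulVec]
    exact hG V W
  · rw [← nakanoPairing_vecMulVec]
    exact hN _

/-- Lemma 7 of the paper, linear-algebra form: in complex dimension `2`, a tensor
with the Kähler curvature symmetries and Hermitian symmetry is Griffiths
nonnegative if and only if it is Nakano nonnegative.  Indices of `T j i l k` are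
in the order `j̄ i l̄ k`. -/
theorem stmt4 (T : Fin 2 → Fin 2 → Fin 2 → Fin 2 → ℂ)
    (hsym1 : ∀ i j k l, T j i l k = T l i j k)
    (hsym2 : ∀ i j k l, T j i l k = T j k l i)
    (hherm : ∀ i j k l, (starRingEnd ℂ) (T j i l k) = T i j k l) :
    (∀ V W : Fin 2 → ℂ, 0 ≤ ∑ i, ∑ j, ∑ k, ∑ l,
        T j i l k * (starRingEnd ℂ) (V j) * V i * (starRingEnd ℂ) (W l) * W k) ↔
    (∀ ζ : Fin 2 → Fin 2 → ℂ, 0 ≤ ∑ i, ∑ j, ∑ k, ∑ l,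
        T j i l k * (starRingEnd ℂ) (ζ j l) * ζ i k) :=
  stmt4_general T hsym1 hsym2
end
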